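/- Let R > 0, h ∈ (0, R], O ∈ ℝ³, and let v₁, …, v_k be unit vectors in ℝ³. For i = 1, …, k let Cap_i = {x ∈ ℝ³ : ‖x − O‖ ≤ R and ⟨x − O, v_i⟩ ≥ R − h}, and assume the sets Cap_1, …, Cap_k are pairwise disjoint. If p_i ∈ Cap_i for each i, then the set {p_1, …, p_k} consists of k distinct points in convex position. -/
import Mathlib


open scoped RealInnerProductSpace

def SolidCap (R h : ℝ) (c v : EuclideanSpace ℝ (Fin 3)) :
    Set (EuclideanSpace ℝ (Fin 3)) :=
  {x | ‖x - c‖ ≤ R ∧ R - h ≤ ⟪x - c, v⟫}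

def ConvexPos (B : Set (EuclideanSpace ℝ (Fin 3))) : Prop :=
  ∀ x ∈ B, x ∉ convexHull ℝ (B \ {x})

theorem points_in_disjoint_caps_convex_position :
    ∀ R : ℝ, 0 < R → ∀ h : ℝ, 0 < h → h ≤ R →
      ∀ O : EuclideanSpace ℝ (Fin 3), ∀ k : ℕ,
      ∀ v : Fin k → EuclideanSpace ℝ (Fin 3), (∀ i, ‖v i‖ = 1) →
      (∀ i j : Fin k, i ≠ j → SolidCap R h O (v i) ∩ SolidCap R h O (v j) = ∅) →
      ∀ p : Fin k → EuclideanSpace ℝ (Fin 3), (∀ i, p i ∈ SolidCap R h O (v i)) →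
        Function.Injective p ∧ ConvexPos (Set.range p) := by
  intro R hR h hh hhR O k v hv hdisj p hp
  have hinj : Function.Injective p := by
    intro i j hij
    by_contra hne
    have := hdisj i j hne
    have : p i ∈ SolidCap R h O (v i) ∩ SolidCap R h O (v j) :=
      ⟨hp i, hij ▸ hp j⟩
    rw [hdisj i j hne] at this
    exact this
  refine ⟨hinj, ?_⟩
  intro x hx hmem
  obtain ⟨i, rfl⟩ := hx
  -- the open halfspace
  set S : Set (EuclideanSpace ℝ (Fin 3)) := {y | ⟪y - O, v i⟫ < R - h} with hS
  have hconv : Convex ℝ S := by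
    have hlin : IsLinearMap ℝ (fun y : EuclideanSpace ℝ (Fin 3) => ⟪y, v i⟫) :=
      ⟨fun a b => inner_add_left a b (v i), fun c a => real_inner_smul_left a (v i) c⟩
    have : S = {y | ⟪y, v i⟫ < R - h + ⟪O, v i⟫} := by
      ext y
      simp only [hS, Set.mem_setOf_eq, inner_sub_left]
      constructor <;> intro hy <;> linarith
    rw [this]
    exact convex_halfSpace_lt hlin _
  have hsub : Set.range p \ {p i} ⊆ S := by
    rintro y ⟨⟨j, rfl⟩, hne⟩
    have hji : j ≠ i := fun e => hne (by rw [e]; rfl)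
    have hnot : p j ∉ SolidCap R h O (v i) := by
      intro hmem'
      have : p j ∈ SolidCap R h O (v j) ∩ SolidCap R h O (v i) := ⟨hp j, hmem'⟩
      rw [hdisj j i hji] at this
      exact this
    have hball : ‖p j - O‖ ≤ R := (hp j).1
    simp only [SolidCap, Set.mem_setOf_eq, not_and, not_le] at hnot
    exact hnot hball
  have : p i ∈ S := hconv.convexHull_subset_iff.mpr hsub hmem
  have hge : R - h ≤ ⟪p i - O, v i⟫ := (hp i).2
  exact absurd this (by simp only [hS, Set.mem_setOf_eq, not_lt]; exact hge)
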